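/- Let A be a finite group acting on a finite set T, let G be a normal subgroup of A with A/G cyclic, and let aG be a generator of A/G. Then the number of A-orbits on T which are also G-orbits equals (1/#G) · Σ_{α ∈ aG} #T^α, where T^α denotes the set of fixed points of α on T. -/

import Mathlib

/-!
Count the pairs `(α, t)` with `α ∈ aG` and `α • t = t` according to `t`. If some `α₀ ∈ aG` fixes
`t`, then every element of `A` lies in some `α₀ⁿ G`, so `A • t = G • t`, and the elements of `aG`
fixing `t` form the coset `α₀ • Stab_G(t)`. Conversely, if `A • t = G • t` then `a • t = g • t`
with `g ∈ G`, and `g⁻¹ a ∈ aG` fixes `t`. So `t` contributes `#Stab_G(t)` or `0` according as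
its `A`-orbit is a `G`-orbit or not, and by orbit–stabilizer the stabilizers along one `G`-orbit
add up to `#G`.
-/

universe u v

open MulAction

theorem finsum_mem_card_setOf_comm {α β : Type*} [Finite α] [Finite β] (s : Set α)
    (r : α → β → Prop) :
    ∑ᶠ a ∈ s, Nat.card {b | r a b} = ∑ᶠ b, Nat.card {a | a ∈ s ∧ r a b} := by
  classical
  cases nonempty_fintype α
  cases nonempty_fintype β
  simp only [finsum_mem_eq_finite_toFinset_sum _ s.toFinite, finsum_eq_sum_of_fintype,
    Nat.card_eq_fintype_card, Fintype.card_subtype]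
  convert Finset.sum_card_bipartiteAbove_eq_sum_card_bipartiteBelow r using 3 <;>
    ext <;> simp [Finset.bipartiteAbove, Finset.bipartiteBelow]

section
variable {G T : Type*} [Group G] [MulAction G T]

theorem finsum_mem_orbit_card_stabilizer (t : T) :
    ∑ᶠ x ∈ orbit G t, Nat.card (stabilizer G x) = Nat.card G := by
  calc ∑ᶠ x ∈ orbit G t, Nat.card (stabilizer G x)
      = ∑ᶠ x ∈ orbit G t, Nat.card (stabilizer G t) :=
        finsum_mem_congr rfl fun x hx => Nat.card_congr
          (stabilizerEquivStabilizerOfOrbitRel (orbitRel_apply.mpr hx)).toEquiv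
    _ = (stabilizer G t).index * Nat.card (stabilizer G t) := by
        rw [index_stabilizer, ← finsum_one, finsum_mem_mul]; simp only [one_mul]
    _ = Nat.card G := (stabilizer G t).index_mul_card

theorem finsum_mem_sUnion_card_stabilizer [Finite T] {P : Set (Set T)}
    (hP : P ⊆ Set.range (orbit G)) :
    ∑ᶠ x ∈ ⋃₀ P, Nat.card (stabilizer G x) = Nat.card G * P.ncard := by
  rw [finsum_mem_sUnion ((orbit.pairwiseDisjoint (G := G)).subset hP) P.toFinite
    fun s _ => s.toFinite, ← finsum_one, mul_finsum_mem, mul_one]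
  refine finsum_mem_congr rfl fun s hs => ?_
  obtain ⟨t, rfl⟩ := hP hs
  exact finsum_mem_orbit_card_stabilizer t
end

def commonOrbits {A : Type*} [Group A] (G : Subgroup A) (T : Type*) [MulAction A T] :
    Set (Set T) :=
  {s | (∃ t, s = orbit A t) ∧ ∃ t, s = orbit G t}

section
variable {A T : Type*} [Group A] [MulAction A T] (G : Subgroup A)

theorem orbit_subgroup_eq_setOf (t : T) : orbit G t = {x | ∃ g ∈ G, g • t = x} := by
  ext
  simp [mem_orbit_iff]

theorem sUnion_commonOrbits : ⋃₀ commonOrbits G T = {t | orbit A t = orbit G t} := by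
  ext x
  constructor
  · rintro ⟨s, ⟨⟨t, rfl⟩, t', hs⟩, hx⟩
    have hx' : x ∈ orbit G t' := hs ▸ hx
    rw [Set.mem_ofPred_eq, orbit_eq_iff.mpr hx, hs, orbit_eq_iff.mpr hx']
  · intro hx
    exact ⟨orbit A x, ⟨⟨x, rfl⟩, x, hx⟩, mem_orbit_self x⟩

theorem card_setOf_mk_eq_smul_eq_of_smul_eq {a : A} {t : T} (h : a • t = t) :
    Nat.card {α : A | (α : A ⧸ G) = a ∧ α • t = t} = Nat.card (stabilizer G t) :=
  Nat.card_congr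
    { toFun α := ⟨⟨a⁻¹ * α, QuotientGroup.eq.mp α.2.1.symm⟩, by
        change (a⁻¹ * α.1) • t = t
        rw [mul_smul, α.2.2, inv_smul_eq_iff, h]⟩
      invFun g := ⟨a * g, (QuotientGroup.eq.mpr (by simp)).symm, by
        rw [mul_smul, show ((g : G) : A) • t = t from g.2, h]⟩
      left_inv α := by ext; simp
      right_inv g := by ext; simp }

variable [G.Normal]

theorem orbit_eq_orbit_subgroup_of_smul_eq {a : A}
    (hgen : ∀ σ : A ⧸ G, σ ∈ Subgroup.zpowers (a : A ⧸ G)) {t : T} (h : a • t = t) :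
    orbit A t = orbit G t := by
  refine subset_antisymm ?_ (orbit_subgroup_subset G t)
  rintro _ ⟨β, rfl⟩
  obtain ⟨n, hn⟩ := Subgroup.mem_zpowers_iff.mp (hgen β)
  have hg : β * (a ^ n)⁻¹ ∈ G := by
    rw [← QuotientGroup.eq_one_iff, QuotientGroup.mk_mul, QuotientGroup.mk_inv,
      QuotientGroup.mk_zpow, hn, mul_inv_cancel]
  have hfix : (a ^ n)⁻¹ • t = t := by
    rw [inv_smul_eq_iff, ((stabilizer A t).zpow_mem h n : a ^ n • t = t)]
  exact ⟨⟨_, hg⟩, show (β * (a ^ n)⁻¹) • t = β • t by rw [mul_smul, hfix]⟩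

theorem exists_mk_eq_smul_eq_of_smul_mem_orbit {a : A} {t : T} (h : a • t ∈ orbit G t) :
    ∃ α : A, (α : A ⧸ G) = a ∧ α • t = t := by
  obtain ⟨g, hg⟩ := h
  refine ⟨(g : A)⁻¹ * a, ?_, ?_⟩
  · rw [QuotientGroup.mk_mul, QuotientGroup.mk_inv, (QuotientGroup.eq_one_iff _).mpr g.2,
      inv_one, one_mul]
  · rw [mul_smul, ← show (g : A) • t = a • t from hg, inv_smul_smul]

theorem card_setOf_mk_eq_smul_eq {a : A}
    (hgen : ∀ σ : A ⧸ G, σ ∈ Subgroup.zpowers (a : A ⧸ G)) (t : T) :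
    Nat.card {α : A | (α : A ⧸ G) = a ∧ α • t = t} =
      Set.indicator {t | orbit A t = orbit G t} (fun t => Nat.card (stabilizer G t)) t := by
  by_cases hc : orbit A t = orbit G t
  · obtain ⟨α, hα, hfix⟩ := exists_mk_eq_smul_eq_of_smul_mem_orbit G (hc ▸ mem_orbit t a)
    rw [Set.indicator_of_mem (s := {t : T | orbit A t = orbit G t}) hc, ← hα]
    exact card_setOf_mk_eq_smul_eq_of_smul_eq G hfix
  · have hempty : {α : A | (α : A ⧸ G) = a ∧ α • t = t} = ∅ :=
      Set.eq_empty_of_forall_notMem fun α ⟨hα, hfix⟩ =>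
        hc (orbit_eq_orbit_subgroup_of_smul_eq G (hα ▸ hgen) hfix)
    rw [Set.indicator_of_notMem (s := {t : T | orbit A t = orbit G t}) hc, hempty,
      Nat.card_of_isEmpty]
end

/-- Lemma 4.3. Let `A` be a finite group acting on a finite set
`T`, let `G` be a normal subgroup of `A` with `A/G` cyclic, and let `aG` be a
generator of `A/G`.  Then the number of `A`-orbits on `T` which are also `G`-orbits
equals `(1/#G) · Σ_{α ∈ aG} #T^α`, where `T^α` is the set of fixed points of `α` on
`T` (stated in the division-free form `#G · (number of common orbits) = Σ`). -/
theorem card_common_orbits_mul_card_eq_sum_fixedPoints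
    {A : Type u} [Group A] [Finite A] {T : Type v} [Finite T] [MulAction A T]
    (G : Subgroup A) [G.Normal] (a : A)
    -- `aG` generates the (cyclic) quotient `A/G`:
    (hgen : ∀ σ : A ⧸ G, σ ∈ Subgroup.zpowers ((a : A) : A ⧸ G)) :
    Nat.card G *
        Nat.card {s : Set T // (∃ t : T, s = MulAction.orbit A t) ∧
          (∃ t : T, s = {x : T | ∃ g ∈ G, g • t = x})} =
      ∑ᶠ α ∈ {α : A | (α : A ⧸ G) = ((a : A) : A ⧸ G)},
        Nat.card {t : T | α • t = t} := by
  have hΩ : {s : Set T | (∃ t : T, s = orbit A t) ∧ ∃ t : T, s = {x : T | ∃ g ∈ G, g • t = x}}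
      = commonOrbits G T := by
    ext s
    simp [commonOrbits, orbit_subgroup_eq_setOf]
  calc Nat.card G * Nat.card {s : Set T // (∃ t : T, s = orbit A t) ∧
          (∃ t : T, s = {x : T | ∃ g ∈ G, g • t = x})}
      = Nat.card G * (commonOrbits G T).ncard := by
        rw [← hΩ, ← Nat.card_coe_set_eq]; rfl
    _ = ∑ᶠ t ∈ ⋃₀ commonOrbits G T, Nat.card (stabilizer G t) :=
        (finsum_mem_sUnion_card_stabilizer (P := commonOrbits G T)
          fun _ ⟨_, t, hs⟩ => ⟨t, hs.symm⟩).symm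
    _ = ∑ᶠ t, Nat.card {α : A | (α : A ⧸ G) = a ∧ α • t = t} := by
        rw [sUnion_commonOrbits, finsum_mem_def]
        exact finsum_congr fun t => (card_setOf_mk_eq_smul_eq G hgen t).symm
    _ = _ := (finsum_mem_card_setOf_comm _ _).symm
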